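/- For every finite simple graph G=(V,E) and every injective function f : V → ℝ, the symmetric indices j_f(x) = (i_f(x) + i_{−f}(x))/2 also sum to the Euler characteristic: Σ_{x∈V} j_f(x) = χ(G). -/
import Mathlib


open Classical Finset

/-- The Euler characteristic of a finite simple graph:
`χ(G) = Σ_{k≥1} (−1)^{k+1} v_k(G)`, where `v_k` counts cliques with `k` vertices. -/
noncomputable def eulerChar {V : Type*} [Fintype V] (G : SimpleGraph V) : ℤ :=
  ∑ s ∈ Finset.univ.powerset.filter
      (fun s : Finset V => s.Nonempty ∧ G.IsClique (s : Set V)),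
    (-1 : ℤ) ^ (s.card + 1)

/-- The Poincaré–Hopf index of an injective function `f` at a vertex `x`:
`i_f(x) = 1 − χ(S_f^−(x))`. -/
noncomputable def fIndex {V : Type*} [Fintype V] (G : SimpleGraph V) (f : V → ℝ) (x : V) : ℤ :=
  1 - eulerChar (G.induce {y | G.Adj x y ∧ f y < f x})

/-- The symmetric index `j_f(x) = (i_f(x) + i_{−f}(x))/2`. -/
noncomputable def symIndex {V : Type*} [Fintype V] (G : SimpleGraph V) (f : V → ℝ) (x : V) : ℚ :=
  ((fIndex G f x : ℚ) + (fIndex G (fun y => -f y) x : ℚ)) / 2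

lemma eulerChar_induce {V : Type*} [Fintype V] (G : SimpleGraph V) (P : Set V) [Fintype P] :
    eulerChar (G.induce P) =
      ∑ t ∈ Finset.univ.powerset.filter
          (fun t : Finset V => t.Nonempty ∧ ↑t ⊆ P ∧ G.IsClique (↑t : Set V)),
        (-1 : ℤ) ^ (t.card + 1) := by
  unfold eulerChar
  apply Finset.sum_bij (fun (s : Finset P) _ => s.map (Function.Embedding.subtype _))
  · intro s hs
    simp only [mem_filter, mem_powerset, subset_univ, true_and] at hs ⊢
    obtain ⟨hne, hcl⟩ := hs
    refine ⟨hne.map, ?_, ?_⟩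
    · intro y hy
      simp only [coe_map, Set.mem_image, Function.Embedding.coe_subtype] at hy
      obtain ⟨a, _, rfl⟩ := hy
      exact a.2
    · intro a ha b hb hab
      simp only [coe_map, Set.mem_image, Function.Embedding.coe_subtype] at ha hb
      obtain ⟨a', ha', rfl⟩ := ha
      obtain ⟨b', hb', rfl⟩ := hb
      have hne' : a' ≠ b' := fun h => hab (by rw [h])
      exact hcl ha' hb' hne'
  · intro s hs s' hs' h
    exact Finset.map_injective _ h
  · intro t ht
    simp only [mem_filter, mem_powerset, subset_univ, true_and] at ht
    obtain ⟨hne, hsub, hcl⟩ := ht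
    refine ⟨t.subtype (· ∈ P), ?_, ?_⟩
    · simp only [mem_filter, mem_powerset, subset_univ, true_and]
      constructor
      · obtain ⟨y, hy⟩ := hne
        exact ⟨⟨y, hsub hy⟩, by simp [Finset.mem_subtype, hy]⟩
      · intro a ha b hb hab
        simp only [Finset.mem_coe, Finset.mem_subtype] at ha hb
        have : (a : V) ≠ (b : V) := fun h => hab (Subtype.ext h)
        exact hcl ha hb this
    · rw [Finset.subtype_map]
      exact Finset.filter_eq_self.mpr (fun y hy => hsub hy)
  · intro s hs
    rw [Finset.card_map]

lemma fIndex_eq_sum {V : Type*} [Fintype V] (G : SimpleGraph V) (f : V → ℝ) (x : V) :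
    fIndex G f x =
      ∑ t ∈ Finset.univ.powerset.filter
          (fun t : Finset V => (∀ y ∈ t, G.Adj x y ∧ f y < f x) ∧ G.IsClique (↑t : Set V)),
        (-1 : ℤ) ^ t.card := by
  classical
  set T := Finset.univ.powerset.filter
      (fun t : Finset V => (∀ y ∈ t, G.Adj x y ∧ f y < f x) ∧ G.IsClique (↑t : Set V)) with hT
  rw [fIndex, eulerChar_induce]
  have hsplit := Finset.sum_filter_add_sum_filter_not T (fun t => t.Nonempty)
      (fun t => (-1 : ℤ) ^ t.card)
  have h1 : T.filter (fun t => ¬ t.Nonempty) = {∅} := by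
    ext t
    simp only [hT, mem_filter, mem_powerset, subset_univ, true_and, mem_singleton,
      Finset.not_nonempty_iff_eq_empty]
    constructor
    · rintro ⟨_, h⟩; exact h
    · rintro rfl
      refine ⟨⟨fun y hy => absurd hy (Finset.notMem_empty y), ?_⟩, rfl⟩
      simp [SimpleGraph.IsClique]
  have h2 : T.filter (fun t => t.Nonempty) =
      Finset.univ.powerset.filter
        (fun t : Finset V => t.Nonempty ∧ ↑t ⊆ {y | G.Adj x y ∧ f y < f x} ∧
          G.IsClique (↑t : Set V)) := by
    ext t
    simp only [hT, mem_filter, mem_powerset, subset_univ, true_and, Set.subset_def,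
      Finset.mem_coe, Set.mem_setOf_eq]
    tauto
  have h3 : ∀ t ∈ T.filter (fun t => t.Nonempty),
      (-1 : ℤ) ^ t.card = -(-1 : ℤ) ^ (t.card + 1) := by
    intro t _; rw [pow_succ]; ring
  calc (1 : ℤ) - ∑ t ∈ Finset.univ.powerset.filter
          (fun t : Finset V => t.Nonempty ∧ ↑t ⊆ {y | G.Adj x y ∧ f y < f x} ∧
            G.IsClique (↑t : Set V)), (-1 : ℤ) ^ (t.card + 1)
      = (∑ t ∈ T.filter (fun t => t.Nonempty), (-1 : ℤ) ^ t.card)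
        + ∑ t ∈ T.filter (fun t => ¬ t.Nonempty), (-1 : ℤ) ^ t.card := by
        rw [h1, h2]
        rw [Finset.sum_congr rfl (by
          intro t _; rw [pow_succ])]
        simp only [Finset.sum_singleton, Finset.card_empty, pow_zero]
        have : ∀ (S : Finset (Finset V)),
            ∑ t ∈ S, (-1:ℤ)^(t.card) * (-1) = - ∑ t ∈ S, (-1:ℤ)^t.card := by
          intro S; rw [← Finset.sum_neg_distrib]; apply Finset.sum_congr rfl; intros; ring
        rw [this]; ring
    _ = ∑ t ∈ T, (-1 : ℤ) ^ t.card := hsplit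

lemma poincare_hopf {V : Type*} [Fintype V] (G : SimpleGraph V)
    (f : V → ℝ) (hf : Function.Injective f) :
    ∑ x : V, fIndex G f x = eulerChar G := by
  classical
  have h : ∀ x : V, fIndex G f x =
      ∑ t ∈ Finset.univ.powerset.filter
          (fun t : Finset V => (∀ y ∈ t, G.Adj x y ∧ f y < f x) ∧ G.IsClique (↑t : Set V)),
        (-1 : ℤ) ^ t.card := fun x => fIndex_eq_sum G f x
  rw [Finset.sum_congr rfl (fun x _ => h x)]
  rw [Finset.sum_sigma']
  unfold eulerChar
  apply Finset.sum_bij (fun (p : Σ _ : V, Finset V) _ => insert p.1 p.2)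
  · rintro ⟨x, t⟩ hp
    simp only [Finset.mem_sigma, mem_filter, mem_powerset, subset_univ, true_and,
      Finset.mem_univ] at hp ⊢
    obtain ⟨hadj, hcl⟩ := hp
    refine ⟨insert_nonempty x t, ?_⟩
    rw [Finset.coe_insert]
    exact hcl.insert (fun b hb _ => (hadj b hb).1)
  · rintro ⟨x, t⟩ hp ⟨x', t'⟩ hp' heq
    simp only [Finset.mem_sigma, mem_filter, mem_powerset, subset_univ, true_and,
      Finset.mem_univ] at hp hp'
    obtain ⟨hadj, -⟩ := hp
    obtain ⟨hadj', -⟩ := hp'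
    simp only at heq
    have hxx' : x = x' := by
      by_contra hne
      have hx : x ∈ insert x' t' := heq ▸ Finset.mem_insert_self x t
      have hx' : x' ∈ insert x t := heq ▸ Finset.mem_insert_self x' t'
      rw [Finset.mem_insert] at hx hx'
      have h1 : f x < f x' := (hadj' x (hx.resolve_left hne)).2
      have h2 : f x' < f x := (hadj x' (hx'.resolve_left (Ne.symm hne))).2
      exact absurd (h1.trans h2) (lt_irrefl _)
    subst hxx'
    have hxt : x ∉ t := fun hx => absurd (hadj x hx).2 (lt_irrefl _)
    have hxt' : x ∉ t' := fun hx => absurd (hadj' x hx).2 (lt_irrefl _)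
    have : t = t' := by
      rw [← Finset.erase_insert hxt, ← Finset.erase_insert hxt', heq]
    subst this
    rfl
  · intro s hs
    simp only [mem_filter, mem_powerset, subset_univ, true_and] at hs
    obtain ⟨hne, hcl⟩ := hs
    obtain ⟨x, hx, hmax⟩ := Finset.exists_max_image s f hne
    refine ⟨⟨x, s.erase x⟩, ?_, ?_⟩
    · simp only [Finset.mem_sigma, mem_filter, mem_powerset, subset_univ, true_and,
        Finset.mem_univ]
      refine ⟨fun y hy => ?_, hcl.subset (by simp [Finset.erase_subset])⟩
      have hys : y ∈ s := Finset.mem_of_mem_erase hy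
      have hyx : y ≠ x := Finset.ne_of_mem_erase hy
      refine ⟨hcl hx hys (Ne.symm hyx), ?_⟩
      exact lt_of_le_of_ne (hmax y hys) (fun h => hyx (hf h))
    · exact Finset.insert_erase hx
  · rintro ⟨x, t⟩ hp
    simp only [Finset.mem_sigma, mem_filter, mem_powerset, subset_univ, true_and,
      Finset.mem_univ] at hp
    obtain ⟨hadj, -⟩ := hp
    have hxt : x ∉ t := fun hx => absurd (hadj x hx).2 (lt_irrefl _)
    simp only [Finset.card_insert_of_notMem hxt]
    rw [pow_succ, pow_succ]
    ring

/-- The symmetric indices `j_f(x)` also sum up to the Euler characteristic. -/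
theorem poincare_hopf_symmetric {V : Type*} [Fintype V] (G : SimpleGraph V)
    (f : V → ℝ) (hf : Function.Injective f) :
    ∑ x : V, symIndex G f x = (eulerChar G : ℚ) := by
  have h1 := poincare_hopf G f hf
  have h2 := poincare_hopf G (fun y => -f y) (fun a b hab => hf (neg_injective hab))
  have : ∑ x : V, symIndex G f x =
      ((∑ x : V, (fIndex G f x : ℚ)) + ∑ x : V, (fIndex G (fun y => -f y) x : ℚ)) / 2 := by
    simp only [symIndex]
    rw [← Finset.sum_div, Finset.sum_add_distrib]
  rw [this, ← Int.cast_sum, ← Int.cast_sum, h1, h2]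
  ring
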